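/- Let q be a prime power, let k, m be positive integers, and let C ⊊ Mat(k×m, F_q) be a non-zero proper F_q-linear subspace. Then minrk(C^⊥) ≤ min{k,m} − minrk(C) + 2, and equality holds if and only if C is an MRD code. -/

import Mathlib

open Matrix BigOperators

/-- The Gaussian (q-)binomial coefficient, defined via the q-Pascal recursion. -/
def qBinom (q : ℕ) : ℕ → ℕ → ℕ
  | _, 0 => 1
  | 0, _ + 1 => 0
  | s + 1, t + 1 => qBinom q s t + q ^ (t + 1) * qBinom q s (t + 1)

variable {F : Type} [Field F]

/-- The dual of a rank-metric code with respect to the trace product. -/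
def dualCode {k m : ℕ} (C : Submodule F (Matrix (Fin k) (Fin m) F)) :
    Submodule F (Matrix (Fin k) (Fin m) F) where
  carrier := {N | ∀ M ∈ C, Matrix.trace (M * Nᵀ) = 0}
  add_mem' := by
    intro a b ha hb M hM
    rw [Set.mem_setOf_eq] at *
    rw [Matrix.transpose_add, Matrix.mul_add, Matrix.trace_add, ha M hM, hb M hM, add_zero]
  zero_mem' := by
    intro M hM
    simp
  smul_mem' := by
    intro c N hN M hM
    rw [Set.mem_setOf_eq] at *
    rw [Matrix.transpose_smul, Matrix.mul_smul, Matrix.trace_smul, hN M hM, smul_zero]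

/-- Minimum rank of a code. -/
noncomputable def minrk {k m : ℕ} (C : Submodule F (Matrix (Fin k) (Fin m) F)) : ℕ :=
  sInf {r | ∃ M ∈ C, M ≠ 0 ∧ M.rank = r}

/-- Maximum rank of a code. -/
noncomputable def maxrk {k m : ℕ} (C : Submodule F (Matrix (Fin k) (Fin m) F)) : ℕ :=
  sSup {r | ∃ M ∈ C, M.rank = r}

/-- Rank distribution of a code. -/
noncomputable def rankDist {k m : ℕ} (C : Submodule F (Matrix (Fin k) (Fin m) F)) (i : ℕ) : ℕ :=
  Nat.card {M : Matrix (Fin k) (Fin m) F // M ∈ C ∧ M.rank = i}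

/-- MRD codes. -/
def IsMRD {k m : ℕ} (C : Submodule F (Matrix (Fin k) (Fin m) F)) : Prop :=
  C = ⊥ ∨ Module.finrank F ↥C = max k m * (min k m - minrk C + 1)

/-- Optimal anticodes. -/
def IsOptimalAnticode {k m : ℕ} (C : Submodule F (Matrix (Fin k) (Fin m) F)) : Prop :=
  Module.finrank F ↥C = max k m * maxrk C

/-- The subspace of matrices whose column space is contained in `U`. -/
def matIn {k : ℕ} (m : ℕ) (U : Submodule F (Fin k → F)) :
    Submodule F (Matrix (Fin k) (Fin m) F) where
  carrier := {M | ∀ j, Mᵀ j ∈ U}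
  add_mem' := by
    intro a b ha hb j
    rw [Matrix.transpose_add]
    exact U.add_mem (ha j) (hb j)
  zero_mem' := by
    intro j
    rw [Matrix.transpose_zero]
    exact U.zero_mem
  smul_mem' := by
    intro c M hM j
    rw [Matrix.transpose_smul]
    exact U.smul_mem c (hM j)

/-- The dual of a subspace of `Fin k → K` with respect to the standard inner product. -/
def dualPi {K : Type} [Field K] {k : ℕ} (C : Submodule K (Fin k → K)) :
    Submodule K (Fin k → K) where
  carrier := {β | ∀ α ∈ C, ∑ i, α i * β i = 0}
  add_mem' := by
    intro a b ha hb α hα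
    rw [Set.mem_setOf_eq] at *
    have : ∑ i, α i * (a + b) i = (∑ i, α i * a i) + ∑ i, α i * b i := by
      rw [← Finset.sum_add_distrib]
      exact Finset.sum_congr rfl fun i _ => by simp [mul_add]
    rw [this, ha α hα, hb α hα, add_zero]
  zero_mem' := by
    intro α hα
    simp
  smul_mem' := by
    intro c β hβ α hα
    rw [Set.mem_setOf_eq] at *
    have : ∑ i, α i * (c • β) i = c * ∑ i, α i * β i := by
      rw [Finset.mul_sum]
      exact Finset.sum_congr rfl fun i _ => by simp [smul_eq_mul]; ring
    rw [this, hβ α hα, mul_zero]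

/-- The matrix associated to a vector `α ∈ K^k` with respect to a basis `G` of `K` over `F`. -/
noncomputable def matOfBasis (F K : Type) [Field F] [Field K] [Algebra F K]
    (k m : ℕ) (G : Module.Basis (Fin m) F K) :
    (Fin k → K) →ₗ[F] Matrix (Fin k) (Fin m) F where
  toFun α := Matrix.of fun i j => G.repr (α i) j
  map_add' α β := by
    ext i j
    simp
  map_smul' c α := by
    ext i j
    simp

/-- The `h`-trace of a `k × m` matrix (`k ≤ m`). -/
def hTrace {k m : ℕ} (hkm : k ≤ m) (h : ℕ) (M : Matrix (Fin k) (Fin m) F) : F :=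
  ∑ i : Fin k, if (i : ℕ) < h then M i (Fin.castLE hkm i) else 0

/-!
The trace product is nondegenerate, so `dim C + dim C^⊥ = k m`. The Singleton bound
along columns, `dim D ≤ m (k - minrk D + 1)`, applied to `C` and to `C^⊥` gives
`m (minrk C^⊥ - 1) ≤ dim C ≤ m (k - minrk C + 1)`; this is the inequality, and equality in it
forces `C` to be MRD. Conversely, let `C` be MRD and suppose some `N ∈ C^⊥` had rank at most
`k - minrk C + 1`. Then the orthogonal complement of the column space of `N` contains a subspace `U`
of dimension `minrk C - 1`, and counting dimensions, `C` and the matrices with all columns in `U`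
span the whole matrix space. Since `N` is orthogonal to both, `N = 0`. The case `m < k` reduces
to `k ≤ m` by transposition.
-/

open Module Submodule LinearMap.BilinForm

section
variable {k m : ℕ}

def traceProduct : LinearMap.BilinForm F (Matrix (Fin k) (Fin m) F) :=
  LinearMap.mk₂ F (fun M N => trace (M * Nᵀ))
    (fun _ _ _ => by rw [Matrix.add_mul, trace_add])
    (fun _ _ _ => by rw [Matrix.smul_mul, trace_smul])
    (fun _ _ _ => by rw [transpose_add, Matrix.mul_add, trace_add])
    (fun _ _ _ => by rw [transpose_smul, Matrix.mul_smul, trace_smul])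

lemma traceProduct_apply (M N : Matrix (Fin k) (Fin m) F) :
    traceProduct M N = trace (M * Nᵀ) := rfl

lemma traceProduct_comm (M N : Matrix (Fin k) (Fin m) F) :
    traceProduct M N = traceProduct N M := by
  rw [traceProduct_apply, traceProduct_apply, ← trace_transpose, transpose_mul,
    transpose_transpose]

lemma traceProduct_single_right (M : Matrix (Fin k) (Fin m) F) (i : Fin k) (j : Fin m) :
    traceProduct M (single i j 1) = M i j := by
  simp [traceProduct_apply, trace_mul_single]

lemma traceProduct_nondegenerate :
    (traceProduct : LinearMap.BilinForm F (Matrix (Fin k) (Fin m) F)).Nondegenerate := by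
  refine ⟨fun M hM => ?_, fun N hN => ?_⟩
  · ext i j
    simpa [traceProduct_single_right] using hM (single i j 1)
  · ext i j
    simpa [traceProduct_comm _ N, traceProduct_single_right] using hN (single i j 1)

lemma dualCode_eq_orthogonal (C : Submodule F (Matrix (Fin k) (Fin m) F)) :
    dualCode C = traceProduct.orthogonal C := rfl

lemma finrank_matrix_fin : finrank F (Matrix (Fin k) (Fin m) F) = k * m := by
  simp [finrank_matrix]

lemma finrank_dualCode (C : Submodule F (Matrix (Fin k) (Fin m) F)) :
    finrank F (dualCode C) = k * m - finrank F C := by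
  rw [dualCode_eq_orthogonal, finrank_orthogonal traceProduct_nondegenerate, finrank_matrix_fin]

lemma dualPi_eq_orthogonal (W : Submodule F (Fin k → F)) :
    dualPi W = LinearMap.BilinForm.orthogonal (dotProductBilin F F) W := rfl

lemma finrank_dualPi (W : Submodule F (Fin k → F)) :
    finrank F (dualPi W) = k - finrank F W := by
  rw [dualPi_eq_orthogonal, finrank_orthogonal, finrank_fin_fun]
  exact ⟨fun v hv => dotProduct_eq_zero v hv,
    fun w hw => dotProduct_eq_zero w fun v => dotProduct_comm w v ▸ hw v⟩

lemma trace_mul_transpose_eq_sum_dotProduct (M N : Matrix (Fin k) (Fin m) F) :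
    trace (M * Nᵀ) = ∑ j, Mᵀ j ⬝ᵥ Nᵀ j := by
  simp only [trace, diag, mul_apply, dotProduct, transpose_apply]
  exact Finset.sum_comm

lemma exists_le_finrank_eq {V : Type*} [AddCommGroup V] [Module F V] (W : Submodule F V) {n : ℕ}
    (hn : n ≤ finrank F W) : ∃ U ≤ W, finrank F U = n := by
  obtain ⟨f, hf⟩ := exists_linearIndependent_of_le_finrank hn
  exact ⟨(span F (Set.range f)).map W.subtype, map_subtype_le _ _, by
    rw [finrank_map_subtype_eq, finrank_span_eq_card hf, Fintype.card_fin]⟩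

noncomputable def matInEquivPi (U : Submodule F (Fin k → F)) :
    matIn m U ≃ₗ[F] (Fin m → U) where
  toFun M j := ⟨(M : Matrix (Fin k) (Fin m) F)ᵀ j, M.2 j⟩
  map_add' _ _ := rfl
  map_smul' _ _ := rfl
  invFun f := ⟨Matrix.of fun i j => (f j : Fin k → F) i, fun j => (f j).2⟩
  left_inv _ := rfl
  right_inv _ := rfl

lemma finrank_matIn (U : Submodule F (Fin k → F)) :
    finrank F (matIn m U) = m * finrank F U := by
  rw [(matInEquivPi U).finrank_eq, finrank_pi_fintype, Finset.sum_const, Finset.card_univ,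
    Fintype.card_fin, smul_eq_mul]

lemma rank_le_finrank_of_mem_matIn {U : Submodule F (Fin k → F)} {M : Matrix (Fin k) (Fin m) F}
    (hM : M ∈ matIn m U) : M.rank ≤ finrank F U := by
  rw [rank_eq_finrank_span_cols]
  exact finrank_mono (span_le.mpr (Set.range_subset_iff.mpr hM))

lemma rank_pos_of_ne_zero {M : Matrix (Fin k) (Fin m) F} (hM : M ≠ 0) : 0 < M.rank := by
  rw [Nat.pos_iff_ne_zero, Matrix.rank, Ne, Submodule.finrank_eq_zero, LinearMap.range_eq_bot,
    ← Matrix.toLin'_apply']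
  exact fun h => hM (Matrix.toLin'.map_eq_zero_iff.mp h)

variable {C : Submodule F (Matrix (Fin k) (Fin m) F)}

lemma exists_rank_eq_minrk (hC : C ≠ ⊥) : ∃ M ∈ C, M ≠ 0 ∧ M.rank = minrk C := by
  obtain ⟨M, hM, hM0⟩ := C.ne_bot_iff.mp hC
  exact Nat.sInf_mem (s := {r | ∃ M ∈ C, M ≠ 0 ∧ M.rank = r}) ⟨M.rank, M, hM, hM0, rfl⟩

lemma minrk_le_rank {M : Matrix (Fin k) (Fin m) F} (hM : M ∈ C) (hM0 : M ≠ 0) :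
    minrk C ≤ M.rank :=
  Nat.sInf_le ⟨M, hM, hM0, rfl⟩

lemma minrk_pos (hC : C ≠ ⊥) : 0 < minrk C := by
  obtain ⟨M, -, hM0, hM⟩ := exists_rank_eq_minrk hC
  exact hM ▸ rank_pos_of_ne_zero hM0

lemma minrk_le_height (hC : C ≠ ⊥) : minrk C ≤ k := by
  obtain ⟨M, -, -, hM⟩ := exists_rank_eq_minrk hC
  exact hM ▸ M.rank_le_height

lemma finrank_sup_matIn {U : Submodule F (Fin k → F)} (hU : finrank F U < minrk C) :
    finrank F ↥(C ⊔ matIn m U) = finrank F C + m * finrank F U := by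
  have hdisj : C ⊓ matIn m U = ⊥ := by
    refine (Submodule.eq_bot_iff _).mpr fun M hM => by_contra fun hM0 => ?_
    have := minrk_le_rank (mem_inf.mp hM).1 hM0
    have := rank_le_finrank_of_mem_matIn (mem_inf.mp hM).2
    omega
  rw [← finrank_matIn U, ← finrank_sup_add_finrank_inf_eq, hdisj, finrank_bot, add_zero]

theorem finrank_add_mul_minrk_sub_one_le (hC : C ≠ ⊥) :
    finrank F C + m * (minrk C - 1) ≤ k * m := by
  have hd := minrk_pos hC
  obtain ⟨U, -, hU⟩ := exists_le_finrank_eq (⊤ : Submodule F (Fin k → F))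
    (n := minrk C - 1) (by rw [finrank_top, finrank_fin_fun]; have := minrk_le_height hC; omega)
  calc finrank F C + m * (minrk C - 1) = finrank F ↥(C ⊔ matIn m U) := by
        rw [finrank_sup_matIn (by omega), hU]
    _ ≤ k * m := by simpa [finrank_matrix_fin] using finrank_le (C ⊔ matIn m U)

lemma dualCode_sup (C D : Submodule F (Matrix (Fin k) (Fin m) F)) :
    dualCode (C ⊔ D) = dualCode C ⊓ dualCode D := by
  simp only [dualCode_eq_orthogonal]
  refine le_antisymm (le_inf (LinearMap.BilinForm.orthogonal_le le_sup_left)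
    (LinearMap.BilinForm.orthogonal_le le_sup_right)) ?_
  intro N hN
  obtain ⟨hC, hD⟩ := mem_inf.mp hN
  rw [mem_orthogonal_iff] at hC hD ⊢
  intro M hM
  obtain ⟨M₁, hM₁, M₂, hM₂, rfl⟩ := mem_sup.mp hM
  rw [map_add, LinearMap.add_apply, hC M₁ hM₁, hD M₂ hM₂, add_zero]

lemma dualCode_top : dualCode (⊤ : Submodule F (Matrix (Fin k) (Fin m) F)) = ⊥ :=
  orthogonal_top_eq_bot traceProduct_nondegenerate

lemma mem_dualCode_matIn {N : Matrix (Fin k) (Fin m) F} {U : Submodule F (Fin k → F)}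
    (hU : U ≤ dualPi (span F (Set.range Nᵀ))) : N ∈ dualCode (matIn m U) := fun M hM => by
  rw [trace_mul_transpose_eq_sum_dotProduct]
  refine Finset.sum_eq_zero fun j _ => ?_
  rw [dotProduct_comm]
  exact hU (hM j) _ (subset_span ⟨j, rfl⟩)

theorem le_minrk_dualCode_of_finrank_eq (hC : C ≠ ⊥) (hD : dualCode C ≠ ⊥)
    (hdim : finrank F C = m * (k - minrk C + 1)) :
    k - minrk C + 2 ≤ minrk (dualCode C) := by
  by_contra! hlt
  obtain ⟨N, hN, hN0, hrk⟩ := exists_rank_eq_minrk hD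
  have hd := minrk_pos hC
  have hdk := minrk_le_height hC
  set W := span F (Set.range Nᵀ)
  have hW : finrank F W = minrk (dualCode C) := by
    rw [← hrk, rank_eq_finrank_span_cols]
    rfl
  obtain ⟨U, hUW, hU⟩ := exists_le_finrank_eq (dualPi W) (n := minrk C - 1)
    (by rw [finrank_dualPi, hW]; omega)
  have htop : C ⊔ matIn m U = ⊤ := by
    refine eq_top_of_finrank_eq ?_
    rw [finrank_sup_matIn (by omega), hdim, hU, finrank_matrix_fin, ← Nat.mul_add, Nat.mul_comm]
    congr 1
    omega
  have : N ∈ dualCode (C ⊔ matIn m U) := by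
    rw [dualCode_sup]
    exact mem_inf.mpr ⟨hN, mem_dualCode_matIn hUW⟩
  rw [htop, dualCode_top, mem_bot] at this
  exact hN0 this

theorem minrk_dualCode_le_and_iff (hC : C ≠ ⊥) (hCt : C ≠ ⊤) :
    minrk (dualCode C) ≤ k - minrk C + 2 ∧
      (minrk (dualCode C) = k - minrk C + 2 ↔ finrank F C = m * (k - minrk C + 1)) := by
  have hCk : finrank F C < k * m := by
    simpa [finrank_matrix_fin] using finrank_lt hCt
  have hdual := finrank_dualCode C
  have hD : dualCode C ≠ ⊥ := by
    intro h
    rw [h, finrank_bot] at hdual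
    omega
  have hm : 0 < m := Nat.pos_of_mul_pos_left (by omega : 0 < k * m)
  have hd := minrk_pos hC
  have hdk := minrk_le_height hC
  have hsC := finrank_add_mul_minrk_sub_one_le hC
  have hsD := finrank_add_mul_minrk_sub_one_le hD
  have hsplit : m * (k - minrk C + 1) + m * (minrk C - 1) = k * m := by
    rw [← Nat.mul_add, Nat.mul_comm]
    congr 1
    omega
  have hle : minrk (dualCode C) - 1 ≤ k - minrk C + 1 :=
    Nat.le_of_mul_le_mul_left (by omega) hm
  refine ⟨by omega, fun heq => ?_, fun hdim => ?_⟩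
  · rw [heq, show k - minrk C + 2 - 1 = k - minrk C + 1 by omega] at hsD
    omega
  · exact le_antisymm (by omega) (le_minrk_dualCode_of_finrank_eq hC hD hdim)

def transposeCode (C : Submodule F (Matrix (Fin k) (Fin m) F)) :
    Submodule F (Matrix (Fin m) (Fin k) F) :=
  C.map (transposeLinearEquiv (Fin k) (Fin m) F F).toLinearMap

lemma mem_transposeCode {C : Submodule F (Matrix (Fin k) (Fin m) F)}
    {N : Matrix (Fin m) (Fin k) F} : N ∈ transposeCode C ↔ Nᵀ ∈ C :=
  mem_map_equiv C

lemma finrank_transposeCode (C : Submodule F (Matrix (Fin k) (Fin m) F)) :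
    finrank F (transposeCode C) = finrank F C :=
  LinearEquiv.finrank_map_eq _ C

lemma minrk_transposeCode (C : Submodule F (Matrix (Fin k) (Fin m) F)) :
    minrk (transposeCode C) = minrk C := by
  unfold minrk
  congr 1
  ext r
  constructor
  · rintro ⟨M, hM, hM0, rfl⟩
    exact ⟨Mᵀ, mem_transposeCode.mp hM, mt transpose_eq_zero.mp hM0, rank_transpose M⟩
  · rintro ⟨M, hM, hM0, rfl⟩
    exact ⟨Mᵀ, mem_transposeCode.mpr hM, mt transpose_eq_zero.mp hM0, rank_transpose M⟩

lemma traceProduct_transpose (M : Matrix (Fin k) (Fin m) F) (N : Matrix (Fin m) (Fin k) F) :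
    traceProduct Mᵀ N = traceProduct M Nᵀ := by
  rw [traceProduct_apply, traceProduct_apply, transpose_transpose, ← transpose_mul,
    trace_transpose, trace_mul_comm]

lemma dualCode_transposeCode (C : Submodule F (Matrix (Fin k) (Fin m) F)) :
    dualCode (transposeCode C) = transposeCode (dualCode C) := by
  ext N
  rw [mem_transposeCode, dualCode_eq_orthogonal, dualCode_eq_orthogonal, mem_orthogonal_iff,
    mem_orthogonal_iff]
  constructor
  · intro hN M hM
    rw [← traceProduct_transpose]
    exact hN Mᵀ (mem_transposeCode.mpr (by rwa [transpose_transpose]))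
  · intro hN M hM
    rw [← transpose_transpose M]
    exact (traceProduct_transpose _ _).trans (hN Mᵀ (mem_transposeCode.mp hM))

end

theorem stmt_8_general (F : Type) [Field F] (k m : ℕ)
    (C : Submodule F (Matrix (Fin k) (Fin m) F)) (hC0 : C ≠ ⊥) (hCt : C ≠ ⊤) :
    minrk (dualCode C) ≤ min k m - minrk C + 2 ∧
      (minrk (dualCode C) = min k m - minrk C + 2 ↔ IsMRD C) := by
  rw [IsMRD, or_iff_right hC0]
  rcases le_total k m with hkm | hmk
  · rw [min_eq_left hkm, max_eq_right hkm]
    exact minrk_dualCode_le_and_iff hC0 hCt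
  · rw [min_eq_right hmk, max_eq_left hmk]
    have h := minrk_dualCode_le_and_iff (C := transposeCode C)
      (by simpa [transposeCode] using hC0) (by simpa [transposeCode] using hCt)
    rwa [dualCode_transposeCode, minrk_transposeCode, minrk_transposeCode,
      finrank_transposeCode] at h

/-- Bound on the minimum rank of the dual code, with equality iff `C` is MRD. -/
theorem stmt_8 (F : Type) [Field F] [Fintype F] (k m : ℕ) (hk : 0 < k) (hm : 0 < m)
    (C : Submodule F (Matrix (Fin k) (Fin m) F)) (hC0 : C ≠ ⊥) (hCt : C ≠ ⊤) :
    minrk (dualCode C) ≤ min k m - minrk C + 2 ∧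
      (minrk (dualCode C) = min k m - minrk C + 2 ↔ IsMRD C) :=
  stmt_8_general F k m C hC0 hCt
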